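/- arXiv:2508.19490 — 5 statements merged into one kernel-verified Lean document; each statement's English description precedes it below -/
import Mathlib

section
/- Let Λ > 0, Q ∈ ℝ with 4ΛQ² < 1, and m > 0 with m² < (1 + 12Q²Λ + (1 - 4Q²Λ)^{3/2})/(18Λ). Define f(r) = -(Λ/3)r⁴ + r² - 2mr + Q². Then f'(((1 + √(1 - 4Q²Λ))/(2Λ))^{1/2}) > 0. -/
theorem stmt_0 (Λ Q m : ℝ) (hΛ : 0 < Λ) (hQ : 4 * Λ * Q^2 < 1) (hm : 0 < m)
    (hm2 : m^2 < (1 + 12 * Q^2 * Λ + (Real.sqrt (1 - 4 * Q^2 * Λ))^3) / (18 * Λ)) :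
    0 < -(4*Λ/3) * (Real.sqrt ((1 + Real.sqrt (1 - 4 * Q^2 * Λ)) / (2*Λ)))^3
        + 2 * Real.sqrt ((1 + Real.sqrt (1 - 4 * Q^2 * Λ)) / (2*Λ)) - 2*m := by
  set s := Real.sqrt (1 - 4 * Q^2 * Λ) with hs
  set r := Real.sqrt ((1 + s) / (2*Λ)) with hrdef
  have h1 : (0:ℝ) < 1 - 4 * Q^2 * Λ := by nlinarith
  have hs0 : 0 ≤ s := Real.sqrt_nonneg _
  have hs2 : s^2 = 1 - 4 * Q^2 * Λ := Real.sq_sqrt h1.le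
  have hs1 : s ≤ 1 := by nlinarith
  have hr0 : 0 ≤ r := Real.sqrt_nonneg _
  have hr2 : r^2 = (1 + s) / (2*Λ) := Real.sq_sqrt (by positivity)
  have hr2' : 2 * Λ * r^2 = 1 + s := by
    rw [hr2]; field_simp
  have hrpos : 0 < r := by
    rcases hr0.lt_or_eq with h | h
    · exact h
    · exfalso; rw [← h] at hr2'; norm_num at hr2'; linarith
  -- key: m < r*(2-s)/3
  have hkey : m < r * (2 - s) / 3 := by
    have hb : 0 < r * (2 - s) / 3 := by
      have : 0 < 2 - s := by linarith
      positivity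
    have hsq : (r * (2 - s) / 3)^2 = (1 + 12 * Q^2 * Λ + s^3) / (18 * Λ) := by
      have : (r * (2 - s) / 3)^2 = r^2 * (2-s)^2 / 9 := by ring
      rw [this, hr2]
      field_simp
      nlinarith [hs2]
    nlinarith [hm2, hsq, hb]
  have h3 : 2*Λ*r^3 = (1+s)*r := by linear_combination r * hr2'
  linarith [hkey, h3]
end

section
/- Let Λ > 0 and Q ∈ ℝ with 4ΛQ² ≤ 1. Then (2Q²/3)·((3+√(9-4ΛQ²))/(2Λ))^{-1/2} < [(1 + 12ΛQ² + (1-4ΛQ²)^{3/2})/(18Λ)]^{1/2}. -/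
theorem stmt_3 (Λ Q : ℝ) (hΛ : 0 < Λ) (hQ : 4 * Λ * Q^2 ≤ 1) :
    (2 * Q^2 / 3) * (Real.sqrt ((3 + Real.sqrt (9 - 4 * Λ * Q^2)) / (2*Λ)))⁻¹
      < Real.sqrt ((1 + 12 * Λ * Q^2 + (Real.sqrt (1 - 4 * Λ * Q^2))^3) / (18 * Λ)) := by
  have hQ2 : 0 ≤ Q^2 := sq_nonneg Q
  have hΛQ : 0 ≤ Λ * Q^2 := mul_nonneg hΛ.le hQ2
  -- inner sqrt bound
  have h9 : (8:ℝ) ≤ 9 - 4*Λ*Q^2 := by nlinarith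
  have h8 : (2:ℝ) ≤ Real.sqrt (9 - 4*Λ*Q^2) := by
    have := Real.sqrt_le_sqrt h9
    nlinarith [Real.sq_sqrt (show (0:ℝ) ≤ 8 by norm_num), Real.sqrt_nonneg (8:ℝ)]
  have hDge : (2/Λ : ℝ) ≤ (3 + Real.sqrt (9 - 4 * Λ * Q^2)) / (2*Λ) := by
    rw [div_le_div_iff₀ hΛ (by positivity)]
    nlinarith
  have hs2 : (0:ℝ) < Real.sqrt (2/Λ) := Real.sqrt_pos.mpr (by positivity)
  have hsD : Real.sqrt (2/Λ) ≤ Real.sqrt ((3 + Real.sqrt (9 - 4 * Λ * Q^2)) / (2*Λ)) :=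
    Real.sqrt_le_sqrt hDge
  have hinv : (Real.sqrt ((3 + Real.sqrt (9 - 4 * Λ * Q^2)) / (2*Λ)))⁻¹ ≤ (Real.sqrt (2/Λ))⁻¹ :=
    inv_anti₀ hs2 hsD
  have hL : (2 * Q^2 / 3) * (Real.sqrt ((3 + Real.sqrt (9 - 4 * Λ * Q^2)) / (2*Λ)))⁻¹
      ≤ (2 * Q^2 / 3) * (Real.sqrt (2/Λ))⁻¹ := by
    apply mul_le_mul_of_nonneg_left hinv (by positivity)
  have hmid : (2 * Q^2 / 3) * (Real.sqrt (2/Λ))⁻¹ < Real.sqrt (1/(18*Λ)) := by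
    rw [show (Real.sqrt (2/Λ))⁻¹ = Real.sqrt (Λ/2) by
      rw [← Real.sqrt_inv]; congr 1; field_simp]
    rw [show (2 * Q^2 / 3) * Real.sqrt (Λ/2) = Real.sqrt ((2 * Q^2 / 3)^2 * (Λ/2)) by
      rw [Real.sqrt_mul (by positivity), Real.sqrt_sq (by positivity)]]
    apply Real.sqrt_lt_sqrt (by positivity)
    rw [lt_div_iff₀ (by positivity)]
    nlinarith [mul_le_mul hQ hQ (by positivity) (by norm_num : (0:ℝ) ≤ 1)]
  have hR : Real.sqrt (1/(18*Λ))
      ≤ Real.sqrt ((1 + 12 * Λ * Q^2 + (Real.sqrt (1 - 4 * Λ * Q^2))^3) / (18 * Λ)) := by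
    apply Real.sqrt_le_sqrt
    gcongr
    nlinarith [pow_nonneg (Real.sqrt_nonneg (1 - 4 * Λ * Q^2)) 3]
  exact lt_of_le_of_lt hL (lt_of_lt_of_le hmid hR)
end

section
/- Let Λ > 0, Q real with 0 < 4ΛQ² ≤ 1, m > 0, and f(r) = -(Λ/3)r⁴ + r² - 2mr + Q². Suppose m² < (1 + 12ΛQ² + (1-4ΛQ²)^{3/2})/(18Λ). Then f(((1+√(1-4ΛQ²))/(2Λ))^{1/2}) > 0. -/
theorem stmt_14 (Λ Q m : ℝ) (hΛ : 0 < Λ) (hQ0 : 0 < 4 * Λ * Q^2) (hQ : 4 * Λ * Q^2 ≤ 1)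
    (hm : 0 < m)
    (hm2 : m^2 < (1 + 12 * Λ * Q^2 + (Real.sqrt (1 - 4 * Λ * Q^2))^3) / (18 * Λ))
    (f : ℝ → ℝ) (hf : ∀ r, f r = -(Λ/3) * r^4 + r^2 - 2*m*r + Q^2) :
    0 < f (Real.sqrt ((1 + Real.sqrt (1 - 4 * Λ * Q^2)) / (2*Λ))) := by
  set s := Real.sqrt (1 - 4 * Λ * Q^2) with hsdef
  have h1 : (0:ℝ) ≤ 1 - 4*Λ*Q^2 := by linarith
  have hs0 : 0 ≤ s := Real.sqrt_nonneg _
  have hs2 : s^2 = 1 - 4*Λ*Q^2 := Real.sq_sqrt h1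
  have hs1 : s < 1 := by nlinarith
  set r := Real.sqrt ((1+s)/(2*Λ)) with hrdef
  have hr2 : r^2 = (1+s)/(2*Λ) := Real.sq_sqrt (by positivity)
  have hrpos : 0 < r := Real.sqrt_pos.mpr (by positivity)
  have hQ2 : Q^2 = (1 - s^2)/(4*Λ) := by field_simp; linarith
  have hfr : f r = (2-s)*(1+s)/(3*Λ) - 2*m*r := by
    rw [hf]
    have h4 : r^4 = ((1+s)/(2*Λ))^2 := by
      have : r^4 = (r^2)^2 := by ring
      rw [this, hr2]
    rw [h4, hr2, hQ2]
    field_simp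
    ring
  rw [hfr]
  have h2s : 0 < 2 - s := by linarith
  have hb : 0 < (2-s)*(1+s)/(3*Λ) := by positivity
  have key : (2*m*r)^2 < ((2-s)*(1+s)/(3*Λ))^2 := by
    have ha : (2*m*r)^2 = 2*m^2*(1+s)/Λ := by
      have : (2*m*r)^2 = 4*m^2*r^2 := by ring
      rw [this, hr2]; field_simp; ring
    rw [ha]
    have hm2' : m^2 < (4 - 3*s^2 + s^3) / (18*Λ) := by
      have : (1 + 12 * Λ * Q^2 + s^3) = 4 - 3*s^2 + s^3 := by
        have : 12 * Λ * Q^2 = 3*(1 - s^2) := by rw [hQ2]; field_simp; ring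
        linarith
      linarith [hm2, this ▸ hm2]
    have hm18 : 18*Λ*m^2 < 4 - 3*s^2 + s^3 := by
      rw [lt_div_iff₀ (by positivity)] at hm2'
      linarith
    have hps : 0 < (1+s)*Λ := by positivity
    rw [div_pow, div_lt_div_iff₀ (by positivity) (by positivity)]
    nlinarith [mul_lt_mul_of_pos_left hm18 hps]
  have hma : 0 < 2*m*r := by positivity
  nlinarith [key, hma, hb]
end

section
/- Let Λ > 0, m > 0, Q real with 0 < 4ΛQ² ≤ 1, and f(r) = -(Λ/3)r⁴ + r² - 2mr + Q² have four distinct real roots r₋₋ < 0 < r₋ < r₊ < r_c. Assume m² < (1+12ΛQ²+(1-4ΛQ²)^{3/2})/(18Λ) and m > (2Q²/3)((3+√(9-4ΛQ²))/(2Λ))^{-1/2}. Then ((1+√(1-4ΛQ²))/(2Λ))^{1/2} < r_c < ((3+√(9-4ΛQ²))/(2Λ))^{1/2}, and consequently -Λr_c⁴ + r_c² - Q² < 0 and -Λr_c⁴ + 3r_c² - Q² > 0. -/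
/-!
Put `a = √((1 + √(1 - 4ΛQ²))/(2Λ))` and `b = √((3 + √(9 - 4ΛQ²))/(2Λ))`, so that `a²` is the
larger root of `Λy² - y + Q²` and `b²` the larger root of `Λy² - 3y + Q²`.
Since `Λa⁴ = a² - Q²`, `f a = 2/3 (a² + 2Q² - 3ma)`, which the bound on `m²` makes positive;
as `f = -(Λ/3) ∏ (r - rᵢ)` is negative beyond its largest root, `a < r_c`.
If `r_c ≥ b`, then `0 ≤ Λr_c⁴ - 3r_c² + Q² = 4Q² - 6m r_c`, contradicting `m b > 2Q²/3`.
So `r_c²` lies above both roots of `Λy² - y + Q²` and between those of `Λy² - 3y + Q²`.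
-/

open Polynomial in
theorem cubic_eq_zero_of_card_lt {R : Type*} [CommRing R] [IsDomain R] {u v w z : R}
    (s : Finset R) (hs : 3 < s.card) (h : ∀ y ∈ s, u * y ^ 3 + v * y ^ 2 + w * y + z = 0)
    (x : R) : u * x ^ 3 + v * x ^ 2 + w * x + z = 0 := by
  have hp : C u * X ^ 3 + C v * X ^ 2 + C w * X + C z = 0 :=
    eq_zero_of_natDegree_lt_card_of_eval_eq_zero' _ s (by simpa using h)
      (natDegree_cubic_le.trans_lt hs)
  simpa using congrArg (eval x) hp

theorem quartic_eq_mul_prod_sub_of_roots {R : Type*} [CommRing R] [IsDomain R]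
    {a b c d e r₁ r₂ r₃ r₄ : R} (p : R → R)
    (hp : ∀ x, p x = a * x ^ 4 + b * x ^ 3 + c * x ^ 2 + d * x + e)
    (h₁₂ : r₁ ≠ r₂) (h₁₃ : r₁ ≠ r₃) (h₁₄ : r₁ ≠ r₄) (h₂₃ : r₂ ≠ r₃) (h₂₄ : r₂ ≠ r₄)
    (h₃₄ : r₃ ≠ r₄) (hr₁ : p r₁ = 0) (hr₂ : p r₂ = 0) (hr₃ : p r₃ = 0) (hr₄ : p r₄ = 0)
    (x : R) : p x = a * (x - r₁) * (x - r₂) * (x - r₃) * (x - r₄) := by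
  classical
  -- `p - a ∏ (X - rᵢ)` is a cubic vanishing at the four roots
  have hcubic := cubic_eq_zero_of_card_lt (u := b + a * (r₁ + r₂ + r₃ + r₄))
    (v := c - a * (r₁ * r₂ + r₁ * r₃ + r₁ * r₄ + r₂ * r₃ + r₂ * r₄ + r₃ * r₄))
    (w := d + a * (r₁ * r₂ * r₃ + r₁ * r₂ * r₄ + r₁ * r₃ * r₄ + r₂ * r₃ * r₄))
    (z := e - a * (r₁ * r₂ * r₃ * r₄)) {r₁, r₂, r₃, r₄}
    (by simp [Finset.card_insert_of_notMem, *])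
    (fun y hy => by
      simp only [Finset.mem_insert, Finset.mem_singleton] at hy
      obtain rfl | rfl | rfl | rfl := hy
      · linear_combination (hp y).symm.trans hr₁
      · linear_combination (hp y).symm.trans hr₂
      · linear_combination (hp y).symm.trans hr₃
      · linear_combination (hp y).symm.trans hr₄) x
  linear_combination hp x + hcubic

theorem quadratic_eq_mul_sub_mul_sub {K : Type*} [Field K] [NeZero (2 : K)] {a b c s : K}
    (ha : a ≠ 0) (hs : s ^ 2 = b ^ 2 - 4 * a * c) (x : K) :
    a * x ^ 2 - b * x + c = a * (x - (b - s) / (2 * a)) * (x - (b + s) / (2 * a)) := by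
  field_simp
  linear_combination hs

section QuadraticSign

variable {a b c s x : ℝ}

theorem quadratic_pos_of_root_lt (ha : 0 < a) (hs₀ : 0 ≤ s) (hs : s ^ 2 = b ^ 2 - 4 * a * c)
    (hx : (b + s) / (2 * a) < x) : 0 < a * x ^ 2 - b * x + c := by
  have hroots : (b - s) / (2 * a) ≤ (b + s) / (2 * a) := by gcongr; linarith
  rw [quadratic_eq_mul_sub_mul_sub ha.ne' hs]
  exact mul_pos (mul_pos ha (by linarith)) (by linarith)

theorem quadratic_nonneg_of_root_le (ha : 0 < a) (hs₀ : 0 ≤ s) (hs : s ^ 2 = b ^ 2 - 4 * a * c)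
    (hx : (b + s) / (2 * a) ≤ x) : 0 ≤ a * x ^ 2 - b * x + c := by
  have hroots : (b - s) / (2 * a) ≤ (b + s) / (2 * a) := by gcongr; linarith
  rw [quadratic_eq_mul_sub_mul_sub ha.ne' hs]
  exact mul_nonneg (mul_nonneg ha.le (by linarith)) (by linarith)

theorem quadratic_neg_of_mem_Ioo (ha : 0 < a) (hs : s ^ 2 = b ^ 2 - 4 * a * c)
    (hx : x ∈ Set.Ioo ((b - s) / (2 * a)) ((b + s) / (2 * a))) :
    a * x ^ 2 - b * x + c < 0 := by
  rw [quadratic_eq_mul_sub_mul_sub ha.ne' hs]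
  exact mul_neg_of_pos_of_neg (mul_pos ha (sub_pos.2 hx.1)) (sub_neg.2 hx.2)

end QuadraticSign

theorem lt_of_mul_prod_sub_pos {a r₁ r₂ r₃ r₄ x : ℝ} (ha : a ≤ 0) (h₁ : r₁ ≤ r₄) (h₂ : r₂ ≤ r₄)
    (h₃ : r₃ ≤ r₄) (h : 0 < a * (x - r₁) * (x - r₂) * (x - r₃) * (x - r₄)) : x < r₄ := by
  by_contra! hx
  have hprod : 0 ≤ (x - r₁) * (x - r₂) * (x - r₃) * (x - r₄) := by
    have := hx.trans' h₁; have := hx.trans' h₂; have := hx.trans' h₃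
    exact mul_nonneg (mul_nonneg (mul_nonneg (by linarith) (by linarith)) (by linarith))
      (by linarith)
  nlinarith [mul_nonpos_of_nonpos_of_nonneg ha hprod]

theorem three_mul_lt_sq_add_two_mul_sq {Λ m Q s a : ℝ} (hΛ : 0 < Λ) (hs₀ : 0 ≤ s)
    (hs : s ^ 2 = 1 - 4 * Λ * Q ^ 2) (ha : 2 * Λ * a ^ 2 = 1 + s)
    (hm : 18 * Λ * m ^ 2 < 1 + 12 * Λ * Q ^ 2 + s ^ 3) : 3 * m * a < a ^ 2 + 2 * Q ^ 2 := by
  -- both sides squared and scaled by `(2Λ)²`: `18Λm²(1 + s) < (1 + s)²(2 - s)²`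
  have hlhs : (2 * Λ) ^ 2 * (3 * m * a) ^ 2 = (1 + s) * (18 * Λ * m ^ 2) := by
    linear_combination (18 * Λ * m ^ 2) * ha
  have hrhs : (2 * Λ) ^ 2 * (a ^ 2 + 2 * Q ^ 2) ^ 2 = (1 + s) * (1 + 12 * Λ * Q ^ 2 + s ^ 3) := by
    linear_combination (2 * Λ * a ^ 2 + 4 * Λ * Q ^ 2 + 2 + s - s ^ 2) * ha
      + (2 * Λ * a ^ 2 + 4 * Λ * Q ^ 2 + 2 + s - s ^ 2 - 3 * (1 + s)) * hs
  have hsq : (3 * m * a) ^ 2 < (a ^ 2 + 2 * Q ^ 2) ^ 2 := by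
    refine lt_of_mul_lt_mul_left ?_ (by positivity : (0 : ℝ) ≤ (2 * Λ) ^ 2)
    rw [hlhs, hrhs]
    gcongr
  exact lt_of_pow_lt_pow_left₀ 2 (by positivity) hsq

theorem sqrt_lt_largest_root {Λ m Q r₁ r₂ r₃ r₄ : ℝ} (f : ℝ → ℝ) (hΛ : 0 < Λ)
    (hQ : 4 * Λ * Q ^ 2 ≤ 1) (hf : ∀ r, f r = -(Λ / 3) * r ^ 4 + r ^ 2 - 2 * m * r + Q ^ 2)
    (h₁₂ : r₁ < r₂) (h₂₃ : r₂ < r₃) (h₃₄ : r₃ < r₄)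
    (hr₁ : f r₁ = 0) (hr₂ : f r₂ = 0) (hr₃ : f r₃ = 0) (hr₄ : f r₄ = 0)
    (hm : m ^ 2 < (1 + 12 * Λ * Q ^ 2 + √(1 - 4 * Λ * Q ^ 2) ^ 3) / (18 * Λ)) :
    √((1 + √(1 - 4 * Λ * Q ^ 2)) / (2 * Λ)) < r₄ := by
  set s := √(1 - 4 * Λ * Q ^ 2)
  have hs₀ : 0 ≤ s := Real.sqrt_nonneg _
  have hs : s ^ 2 = 1 ^ 2 - 4 * Λ * Q ^ 2 := by rw [Real.sq_sqrt (by linarith), one_pow]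
  set a := √((1 + s) / (2 * Λ))
  have ha : a ^ 2 = (1 + s) / (2 * Λ) := Real.sq_sqrt (by positivity)
  have ha₄ : Λ * (a ^ 2) ^ 2 - 1 * a ^ 2 + Q ^ 2 = 0 := by
    rw [quadratic_eq_mul_sub_mul_sub hΛ.ne' hs, ha, sub_self, mul_zero]
  have hma : 3 * m * a < a ^ 2 + 2 * Q ^ 2 :=
    three_mul_lt_sq_add_two_mul_sq hΛ hs₀ (by linarith) (by rw [ha]; field_simp)
      (by rwa [lt_div_iff₀ (by positivity), mul_comm] at hm)
  have hfa : 0 < f a := by rw [hf]; linarith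
  have hfactor := quartic_eq_mul_prod_sub_of_roots (a := -(Λ / 3)) (b := 0) (c := 1)
    (d := -2 * m) (e := Q ^ 2) f (fun x => by rw [hf]; ring) h₁₂.ne (h₁₂.trans h₂₃).ne
    (h₁₂.trans (h₂₃.trans h₃₄)).ne h₂₃.ne (h₂₃.trans h₃₄).ne h₃₄.ne hr₁ hr₂ hr₃ hr₄
  exact lt_of_mul_prod_sub_pos (by linarith) (h₁₂.trans (h₂₃.trans h₃₄)).le
    (h₂₃.trans h₃₄).le h₃₄.le (hfactor a ▸ hfa)

theorem root_lt_sqrt {Λ m Q r : ℝ} (hΛ : 0 < Λ) (hm : 0 < m) (hQ : 4 * Λ * Q ^ 2 ≤ 9)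
    (hr : -(Λ / 3) * r ^ 4 + r ^ 2 - 2 * m * r + Q ^ 2 = 0)
    (hmass : 2 * Q ^ 2 / 3 < m * √((3 + √(9 - 4 * Λ * Q ^ 2)) / (2 * Λ))) :
    r < √((3 + √(9 - 4 * Λ * Q ^ 2)) / (2 * Λ)) := by
  set t := √(9 - 4 * Λ * Q ^ 2)
  have ht : t ^ 2 = 3 ^ 2 - 4 * Λ * Q ^ 2 := by rw [Real.sq_sqrt (by linarith)]; norm_num
  set b := √((3 + t) / (2 * Λ))
  have hb : b ^ 2 = (3 + t) / (2 * Λ) := Real.sq_sqrt (by positivity)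
  by_contra! hbr
  have hq : 0 ≤ Λ * (r ^ 2) ^ 2 - 3 * r ^ 2 + Q ^ 2 :=
    quadratic_nonneg_of_root_le hΛ (Real.sqrt_nonneg _) ht
      (hb ▸ pow_le_pow_left₀ (Real.sqrt_nonneg _) hbr 2)
  linarith [mul_le_mul_of_nonneg_left hbr hm.le]

theorem stmt_17_general (Λ m Q : ℝ) (hΛ : 0 < Λ) (hm : 0 < m)
    (hQ : 4 * Λ * Q^2 ≤ 1)
    (f : ℝ → ℝ) (hf : ∀ r, f r = -(Λ/3) * r^4 + r^2 - 2*m*r + Q^2)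
    (rmm rm rp rc : ℝ)
    (h1 : rmm < 0) (h2 : 0 < rm) (h3 : rm < rp) (h4 : rp < rc)
    (hrmm : f rmm = 0) (hrm : f rm = 0) (hrp : f rp = 0) (hrc : f rc = 0)
    (hm2 : m^2 < (1 + 12 * Λ * Q^2 + (Real.sqrt (1 - 4 * Λ * Q^2))^3) / (18 * Λ))
    (hmass : m > (2 * Q^2 / 3) * (Real.sqrt ((3 + Real.sqrt (9 - 4 * Λ * Q^2)) / (2*Λ)))⁻¹) :
    Real.sqrt ((1 + Real.sqrt (1 - 4 * Λ * Q^2)) / (2*Λ)) < rc ∧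
      rc < Real.sqrt ((3 + Real.sqrt (9 - 4 * Λ * Q^2)) / (2*Λ)) ∧
      -Λ * rc^4 + rc^2 - Q^2 < 0 ∧
      0 < -Λ * rc^4 + 3 * rc^2 - Q^2 := by
  have hlower := sqrt_lt_largest_root f hΛ hQ hf (h1.trans h2) h3 h4 hrmm hrm hrp hrc hm2
  have hupper := root_lt_sqrt hΛ hm (by linarith) (hf rc ▸ hrc) <| by
    rwa [gt_iff_lt, ← div_eq_mul_inv, div_lt_iff₀ (Real.sqrt_pos.2 (by positivity))] at hmass
  have hs : √(1 - 4 * Λ * Q ^ 2) ^ 2 = 1 ^ 2 - 4 * Λ * Q ^ 2 := by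
    rw [Real.sq_sqrt (by linarith), one_pow]
  have ht : √(9 - 4 * Λ * Q ^ 2) ^ 2 = 3 ^ 2 - 4 * Λ * Q ^ 2 := by
    rw [Real.sq_sqrt (by linarith)]; norm_num
  have hrc : 0 < rc := (Real.sqrt_nonneg _).trans_lt hlower
  have hrc_gt : (1 + √(1 - 4 * Λ * Q ^ 2)) / (2 * Λ) < rc ^ 2 := (Real.sqrt_lt' hrc).1 hlower
  have hrc_lt : rc ^ 2 < (3 + √(9 - 4 * Λ * Q ^ 2)) / (2 * Λ) := (Real.lt_sqrt hrc.le).1 hupper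
  have ht₂ : 2 < √(9 - 4 * Λ * Q ^ 2) := (Real.lt_sqrt zero_le_two).2 (by linarith)
  have hroots : (3 - √(9 - 4 * Λ * Q ^ 2)) / (2 * Λ) < (1 + √(1 - 4 * Λ * Q ^ 2)) / (2 * Λ) := by
    gcongr; linarith [Real.sqrt_nonneg (1 - 4 * Λ * Q ^ 2)]
  refine ⟨hlower, hupper, ?_, ?_⟩
  · linarith [quadratic_pos_of_root_lt hΛ (Real.sqrt_nonneg _) hs hrc_gt]
  · linarith [quadratic_neg_of_mem_Ioo hΛ ht ⟨hroots.trans hrc_gt, hrc_lt⟩]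

theorem stmt_17 (Λ m Q : ℝ) (hΛ : 0 < Λ) (hm : 0 < m)
    (hQ0 : 0 < 4 * Λ * Q^2) (hQ : 4 * Λ * Q^2 ≤ 1)
    (f : ℝ → ℝ) (hf : ∀ r, f r = -(Λ/3) * r^4 + r^2 - 2*m*r + Q^2)
    (rmm rm rp rc : ℝ)
    (h1 : rmm < 0) (h2 : 0 < rm) (h3 : rm < rp) (h4 : rp < rc)
    (hrmm : f rmm = 0) (hrm : f rm = 0) (hrp : f rp = 0) (hrc : f rc = 0)
    (hm2 : m^2 < (1 + 12 * Λ * Q^2 + (Real.sqrt (1 - 4 * Λ * Q^2))^3) / (18 * Λ))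
    (hmass : m > (2 * Q^2 / 3) * (Real.sqrt ((3 + Real.sqrt (9 - 4 * Λ * Q^2)) / (2*Λ)))⁻¹) :
    Real.sqrt ((1 + Real.sqrt (1 - 4 * Λ * Q^2)) / (2*Λ)) < rc ∧
      rc < Real.sqrt ((3 + Real.sqrt (9 - 4 * Λ * Q^2)) / (2*Λ)) ∧
      -Λ * rc^4 + rc^2 - Q^2 < 0 ∧
      0 < -Λ * rc^4 + 3 * rc^2 - Q^2 :=
  stmt_17_general Λ m Q hΛ hm hQ f hf rmm rm rp rc h1 h2 h3 h4 hrmm hrm hrp hrc hm2 hmass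
end

section
/- Let Λ > 0 and Q real with 0 < 4ΛQ² ≤ 9. If m = (2Q²/3)·((3+√(9-4ΛQ²))/(2Λ))^{-1/2}, then r₀ := ((3+√(9-4ΛQ²))/(2Λ))^{1/2} is a root of f(r) = -(Λ/3)r⁴ + r² - 2mr + Q², and at this root -Λr₀⁴ + r₀² - Q² < 0 and -Λr₀⁴ + 3r₀² - Q² = 0. -/
theorem stmt_18 (Λ Q m : ℝ) (hΛ : 0 < Λ) (hQ0 : 0 < 4 * Λ * Q^2) (hQ : 4 * Λ * Q^2 ≤ 9)
    (hm : m = (2 * Q^2 / 3) * (Real.sqrt ((3 + Real.sqrt (9 - 4 * Λ * Q^2)) / (2*Λ)))⁻¹) :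
    -(Λ/3) * (Real.sqrt ((3 + Real.sqrt (9 - 4 * Λ * Q^2)) / (2*Λ)))^4
        + (Real.sqrt ((3 + Real.sqrt (9 - 4 * Λ * Q^2)) / (2*Λ)))^2
        - 2 * m * Real.sqrt ((3 + Real.sqrt (9 - 4 * Λ * Q^2)) / (2*Λ)) + Q^2 = 0
    ∧ -Λ * (Real.sqrt ((3 + Real.sqrt (9 - 4 * Λ * Q^2)) / (2*Λ)))^4
        + (Real.sqrt ((3 + Real.sqrt (9 - 4 * Λ * Q^2)) / (2*Λ)))^2 - Q^2 < 0
    ∧ -Λ * (Real.sqrt ((3 + Real.sqrt (9 - 4 * Λ * Q^2)) / (2*Λ)))^4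
        + 3 * (Real.sqrt ((3 + Real.sqrt (9 - 4 * Λ * Q^2)) / (2*Λ)))^2 - Q^2 = 0 := by
  set s := Real.sqrt (9 - 4 * Λ * Q^2) with hs_def
  have hs0 : 0 ≤ s := Real.sqrt_nonneg _
  have hs2 : s^2 = 9 - 4 * Λ * Q^2 := Real.sq_sqrt (by linarith)
  set x := (3 + s) / (2*Λ) with hx_def
  have hxpos : 0 < x := div_pos (by linarith) (by linarith)
  set r := Real.sqrt x with hr_def
  have hrpos : 0 < r := Real.sqrt_pos.mpr hxpos
  have hr2 : r^2 = x := Real.sq_sqrt hxpos.le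
  have hkey : Λ * x^2 - 3 * x + Q^2 = 0 := by
    have h2 : 2 * Λ * x = 3 + s := by
      rw [hx_def]; field_simp
    nlinarith [hs2, h2, hΛ]
  have hr4 : r^4 = x^2 := by nlinarith [hr2]
  refine ⟨?_, ?_, ?_⟩
  · rw [hm]
    have hinv : r * r⁻¹ = 1 := mul_inv_cancel₀ hrpos.ne'
    nlinarith [hkey, hr2, hr4, hinv]
  · nlinarith [hkey, hr2, hr4, hxpos]
  · nlinarith [hkey, hr2, hr4]
end
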